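/- arXiv:0801.3680 — 5 statements merged into one kernel-verified Lean document; each statement's English description precedes it below -/
import Mathlib

section
/- Let q and K be natural numbers and let U_1, ..., U_K and V_1, ..., V_K be finite subsets of some universe such that |U_i| + |V_i| ≤ q for every i, and such that U_i ∩ V_j is not a subset of V_i for every pair i ≠ j. Then K ≤ C(q, ⌊q/2⌋), the binomial coefficient q choose ⌊q/2⌋. -/
/-!
Put `A i = U i \ V i` and `B i = V i`. Then `A i` and `B i` are disjoint while `A i` meets `B j`
for `i ≠ j`, so Bollobás's inequality gives `∑ i, C(|A i| + |B i|, |B i|)⁻¹ ≤ 1`, and every term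
is at least `C(q, ⌊q/2⌋)⁻¹`. Bollobás's inequality is proved by induction on a ground set `X`:
for each `x ∈ X` the pairs `(A i, B i \ {x})` with `x ∉ A i` satisfy the hypotheses inside
`X \ {x}`; summing these `|X|` inequalities, pair `i` contributes exactly `|X|` times its weight,
by the identity `b / C(a + b - 1, b - 1) = (a + b) / C(a + b, b)`.
-/

open Finset

lemma add_one_div_choose_eq (a b : ℕ) :
    ((b + 1 : ℕ) : ℚ) / (a + b).choose b = ((a + b + 1 : ℕ) : ℚ) / (a + b + 1).choose (b + 1) := by
  have h₁ : ((a + b).choose b : ℚ) ≠ 0 := by exact_mod_cast (Nat.choose_pos (by omega)).ne'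
  have h₂ : ((a + b + 1).choose (b + 1) : ℚ) ≠ 0 := by
    exact_mod_cast (Nat.choose_pos (by omega)).ne'
  rw [div_eq_div_iff h₁ h₂]
  exact_mod_cast (Nat.mul_comm _ _).trans (Nat.add_one_mul_choose_eq (a + b) b).symm

section Bollobas

variable {ι α : Type*} [DecidableEq α]

lemma sum_sdiff_inv_choose_card_erase {X A B : Finset α} (hA : A ⊆ X) (hB : B ⊆ X)
    (hAB : Disjoint A B) (hBne : B.Nonempty) :
    ∑ x ∈ X \ A, ((#A + #(B.erase x)).choose #(B.erase x) : ℚ)⁻¹ =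
      #X * ((#A + #B).choose #B : ℚ)⁻¹ := by
  obtain ⟨b, hb⟩ : ∃ b, #B = b + 1 := Nat.exists_eq_add_one.2 hBne.card_pos
  set C := X \ (A ∪ B)
  have hsplit : X \ A = B ∪ C := by
    ext x
    have := @hB x
    have := fun h => disjoint_left.1 hAB (h : x ∈ A)
    simp only [C, mem_sdiff, mem_union]
    tauto
  have hcard : #X = #A + (b + 1) + #C := by
    rw [← card_sdiff_add_card_eq_card (union_subset hA hB), card_union_of_disjoint hAB, hb]
    exact add_comm _ _
  have hB_sum : ∑ x ∈ B, ((#A + #(B.erase x)).choose #(B.erase x) : ℚ)⁻¹ =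
      (b + 1) * ((#A + b).choose b : ℚ)⁻¹ := by
    rw [sum_congr rfl fun x hx => by rw [card_erase_of_mem hx, hb, Nat.add_sub_cancel],
      sum_const, hb, nsmul_eq_mul]
    push_cast; rfl
  have hC_sum : ∑ x ∈ C, ((#A + #(B.erase x)).choose #(B.erase x) : ℚ)⁻¹ =
      #C * ((#A + (b + 1)).choose (b + 1) : ℚ)⁻¹ := by
    rw [sum_congr rfl fun x hx => by rw [erase_eq_of_notMem (by simp_all [C])], sum_const, hb,
      nsmul_eq_mul]
  rw [hsplit, sum_union (disjoint_sdiff.mono_left subset_union_right), hB_sum, hC_sum, hcard, hb]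
  have := add_one_div_choose_eq #A b
  simp only [div_eq_mul_inv, ← add_assoc] at this ⊢
  push_cast at this ⊢
  linear_combination this

theorem bollobas_inequality_of_subset (X : Finset α) {s : Finset ι} (A : ι → Finset α)
    {B : ι → Finset α} (hA : ∀ i ∈ s, A i ⊆ X) (hB : ∀ i ∈ s, B i ⊆ X)
    (hAB : ∀ i ∈ s, Disjoint (A i) (B i))
    (hcross : ∀ i ∈ s, ∀ j ∈ s, i ≠ j → ¬Disjoint (A i) (B j)) :
    ∑ i ∈ s, ((#(A i) + #(B i)).choose #(B i) : ℚ)⁻¹ ≤ 1 := by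
  induction X using Finset.strongInduction generalizing s B with
  | H X ih =>
  by_cases hBne : ∀ i ∈ s, (B i).Nonempty
  swap
  · push Not at hBne
    obtain ⟨i, hi, hBi⟩ := hBne
    have hs : s = {i} := eq_singleton_iff_unique_mem.2
      ⟨hi, fun j hj => by_contra fun hji => hcross j hj i hi hji (by simp [hBi])⟩
    simp [hs, hBi]
  obtain rfl | ⟨i₀, hi₀⟩ := s.eq_empty_or_nonempty
  · simp
  have hX : (0 : ℚ) < #X := Nat.cast_pos.2 ((hBne i₀ hi₀).mono (hB i₀ hi₀)).card_pos
  have hdelete : ∀ x ∈ X, ∑ i ∈ s with x ∉ A i,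
      ((#(A i) + #((B i).erase x)).choose #((B i).erase x) : ℚ)⁻¹ ≤ 1 := by
    intro x hx
    refine ih (X.erase x) (erase_ssubset hx) (B := fun i => (B i).erase x) ?_ ?_ ?_ ?_
    · intro i hi
      simp only [mem_filter] at hi
      exact fun y hy => mem_erase.2 ⟨fun h => hi.2 (h ▸ hy), hA i hi.1 hy⟩
    · exact fun i hi => erase_subset_erase x (hB i (mem_filter.1 hi).1)
    · exact fun i hi => (hAB i (mem_filter.1 hi).1).mono_right (erase_subset x _)
    · intro i hi j hj hij hdisj
      exact hcross i (mem_filter.1 hi).1 j (mem_filter.1 hj).1 hij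
        (disjoint_of_erase_right (mem_filter.1 hi).2 hdisj)
  rw [← mul_le_mul_iff_right₀ hX, mul_one]
  calc (#X : ℚ) * ∑ i ∈ s, ((#(A i) + #(B i)).choose #(B i) : ℚ)⁻¹
      = ∑ i ∈ s, ∑ x ∈ X \ A i, ((#(A i) + #((B i).erase x)).choose #((B i).erase x) : ℚ)⁻¹ := by
        rw [mul_sum]
        exact sum_congr rfl fun i hi => (sum_sdiff_inv_choose_card_erase (hA i hi) (hB i hi)
          (hAB i hi) (hBne i hi)).symm
    _ = ∑ x ∈ X, ∑ i ∈ s with x ∉ A i,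
          ((#(A i) + #((B i).erase x)).choose #((B i).erase x) : ℚ)⁻¹ :=
        sum_comm' fun i x => by simp only [mem_sdiff, mem_filter]; tauto
    _ ≤ ∑ x ∈ X, 1 := sum_le_sum hdelete
    _ = #X := by simp

theorem bollobas_inequality_s0 {s : Finset ι} (A B : ι → Finset α)
    (hAB : ∀ i ∈ s, Disjoint (A i) (B i))
    (hcross : ∀ i ∈ s, ∀ j ∈ s, i ≠ j → ¬Disjoint (A i) (B j)) :
    ∑ i ∈ s, ((#(A i) + #(B i)).choose #(B i) : ℚ)⁻¹ ≤ 1 :=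
  bollobas_inequality_of_subset (s.biUnion fun i => A i ∪ B i) A
    (fun _ hi => subset_union_left.trans (subset_biUnion_of_mem (fun i => A i ∪ B i) hi))
    (fun _ hi => subset_union_right.trans (subset_biUnion_of_mem (fun i => A i ∪ B i) hi))
    hAB hcross

theorem card_le_choose_half_of_cross_intersecting {q : ℕ} {s : Finset ι} {A B : ι → Finset α}
    (hq : ∀ i ∈ s, #(A i) + #(B i) ≤ q) (hAB : ∀ i ∈ s, Disjoint (A i) (B i))
    (hcross : ∀ i ∈ s, ∀ j ∈ s, i ≠ j → ¬Disjoint (A i) (B j)) :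
    #s ≤ q.choose (q / 2) := by
  have hpos : (0 : ℚ) < q.choose (q / 2) := Nat.cast_pos.2 (Nat.choose_pos (Nat.div_le_self q 2))
  have hterm : ∀ i ∈ s, (q.choose (q / 2) : ℚ)⁻¹ ≤ ((#(A i) + #(B i)).choose #(B i) : ℚ)⁻¹ :=
    fun i hi => inv_anti₀ (Nat.cast_pos.2 (Nat.choose_pos (Nat.le_add_left _ _))) <| by
      exact_mod_cast (Nat.choose_le_choose _ (hq i hi)).trans (Nat.choose_le_middle _ _)
  have hsum := (sum_le_sum hterm).trans (bollobas_inequality_s0 A B hAB hcross)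
  rw [sum_const, nsmul_eq_mul, ← div_eq_mul_inv, div_le_one hpos] at hsum
  exact_mod_cast hsum

end Bollobas

/-- The Combinatorial Lemma: if `|U i| + |V i| ≤ q` for every `i` and
`U i ∩ V j ⊈ V i` for every `i ≠ j`, then `K ≤ C(q, ⌊q/2⌋)`. -/
theorem combinatorial_lemma {α : Type*} [DecidableEq α] (q K : ℕ)
    (U V : Fin K → Finset α)
    (hcard : ∀ i, (U i).card + (V i).card ≤ q)
    (hnsub : ∀ i j, i ≠ j → ¬ (U i ∩ V j ⊆ V i)) :
    K ≤ q.choose (q / 2) := by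
  simpa using card_le_choose_half_of_cross_intersecting (s := univ)
    (A := fun i => U i \ V i) (B := V)
    (fun i _ => (Nat.add_le_add_right (card_le_card sdiff_subset) _).trans (hcard i))
    (fun i _ => sdiff_disjoint)
    (fun i _ j _ hij hdisj => hnsub i j hij fun x hx => by_contra fun hxV =>
      disjoint_left.1 hdisj (mem_sdiff.2 ⟨(mem_inter.1 hx).1, hxV⟩) (mem_inter.1 hx).2)
end

section
/- Bollobás's inequality: let U_1, ..., U_K and V_1, ..., V_K be finite subsets of some universe such that for all indices i, j one has U_i ∩ V_j = ∅ if and only if i = j. Then the sum over i from 1 to K of 1 / C(|U_i| + |V_i|, |V_i|) is at most 1. -/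
/-!
Induction on the ground set `X`. If some `V i` is empty the family consists of a single pair, so
assume all `V i` are nonempty. For `x ∈ X`, the pairs `(U i, V i \ {x})` with `x ∉ U i` form a
family of the same kind on `X \ {x}`, so by induction their weights sum to at most `1`. Summing over
`x ∈ X`, the pair `(U i, V i)` receives `|V i|` times the weight `1 / C(a + b - 1, b - 1)` and
`|X| - a - b` times its own weight `1 / C(a + b, b)` (where `a = |U i|`, `b = |V i|`), and since
`b / C(a + b - 1, b - 1) = (a + b) / C(a + b, b)` this totals `|X|` times its weight.
-/

open Finset

theorem succ_div_choose_eq_div_choose_succ (a b : ℕ) :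
    ((b + 1 : ℕ) : ℝ) / (a + b).choose b =
      ((a + (b + 1) : ℕ) : ℝ) / (a + (b + 1)).choose (b + 1) := by
  have hpos : ∀ m k : ℕ, k ≤ m → (0 : ℝ) < m.choose k := fun m k hk => mod_cast Nat.choose_pos hk
  rw [div_eq_div_iff (hpos _ _ (Nat.le_add_left _ _)).ne' (hpos _ _ (Nat.le_add_left _ _)).ne',
    ← add_assoc]
  exact_mod_cast (mul_comm _ _).trans (Nat.add_one_mul_choose_eq (a + b) b).symm

section

variable {α ι : Type*}

theorem sum_one_div_choose_le_one_of_subset_singleton {s : Finset ι} {i : ι} (hs : s ⊆ {i})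
    (U V : ι → Finset α) :
    ∑ j ∈ s, (1 : ℝ) / ((#(U j) + #(V j)).choose #(V j) : ℝ) ≤ 1 :=
  calc _ ≤ ∑ j ∈ {i}, (1 : ℝ) / ((#(U j) + #(V j)).choose #(V j) : ℝ) :=
        sum_le_sum_of_subset_of_nonneg hs fun _ _ _ => by positivity
    _ ≤ 1 := by
        rw [sum_singleton]
        exact div_le_one_of_le₀ (mod_cast Nat.choose_pos (Nat.le_add_left _ _)) (by positivity)

variable [DecidableEq α]

theorem sum_sdiff_one_div_choose_erase {A B X : Finset α} (hA : A ⊆ X) (hB : B ⊆ X)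
    (hAB : Disjoint A B) (hBne : B.Nonempty) :
    ∑ x ∈ X \ A, (1 : ℝ) / (#A + #(B.erase x)).choose #(B.erase x) =
      #X / (#A + #B).choose #B := by
  obtain ⟨b, hb⟩ : ∃ b, #B = b + 1 := Nat.exists_eq_add_one.2 hBne.card_pos
  have hin : (X \ A).filter (· ∈ B) = B := by
    ext x
    simp only [mem_filter, mem_sdiff]
    exact ⟨And.right, fun hx => ⟨⟨hB hx, disjoint_right.1 hAB hx⟩, hx⟩⟩
  have hcard : #((X \ A).filter (· ∉ B)) + #A + #B = #X := by
    have := card_filter_add_card_filter_not (s := X \ A) (· ∈ B)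
    have := card_sdiff_add_card_eq_card hA
    rw [hin] at *
    omega
  have on_B : ∀ x ∈ (X \ A).filter (· ∈ B), #(B.erase x) = b := fun x hx => by
    rw [card_erase_of_mem (mem_filter.1 hx).2, hb, Nat.add_sub_cancel]
  have off_B : ∀ x ∈ (X \ A).filter (· ∉ B), B.erase x = B :=
    fun x hx => erase_eq_of_notMem (mem_filter.1 hx).2
  rw [← sum_filter_add_sum_filter_not _ (· ∈ B), sum_congr rfl fun x hx => by rw [on_B x hx],
    sum_const, sum_congr rfl fun x hx => by rw [off_B x hx], sum_const, hin, nsmul_eq_mul,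
    nsmul_eq_mul, ← hcard, hb, mul_one_div, succ_div_choose_eq_div_choose_succ]
  push_cast
  ring

theorem bollobas_inequality_on (X : Finset α) (s : Finset ι) (U V : ι → Finset α)
    (hU : ∀ i ∈ s, U i ⊆ X) (hV : ∀ i ∈ s, V i ⊆ X)
    (h : ∀ i ∈ s, ∀ j ∈ s, Disjoint (U i) (V j) ↔ i = j) :
    ∑ i ∈ s, (1 : ℝ) / ((#(U i) + #(V i)).choose #(V i) : ℝ) ≤ 1 := by
  induction X using Finset.strongInduction generalizing s V with
  | H X ih =>
  by_cases hVne : ∀ i ∈ s, (V i).Nonempty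
  swap
  · push Not at hVne
    obtain ⟨i, hi, hVi⟩ := hVne
    exact sum_one_div_choose_le_one_of_subset_singleton
      (fun j hj => mem_singleton.2 ((h j hj i hi).1 (by simp [hVi]))) U V
  rcases s.eq_empty_or_nonempty with rfl | ⟨i₀, hi₀⟩
  · simp
  have hX : (0 : ℝ) < #X := mod_cast card_pos.2 ((hVne i₀ hi₀).mono (hV i₀ hi₀))
  have restrict : ∀ x ∈ X, ∑ i ∈ s with x ∉ U i,
      (1 : ℝ) / (#(U i) + #((V i).erase x)).choose #((V i).erase x) ≤ 1 := by
    intro x hx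
    refine ih (X.erase x) (erase_ssubset hx) _ _ (fun i hi => ?_) (fun i hi => ?_)
      (fun i hi j hj => ?_)
    · exact subset_erase.2 ⟨hU i (mem_filter.1 hi).1, (mem_filter.1 hi).2⟩
    · exact erase_subset_erase x (hV i (mem_filter.1 hi).1)
    · rw [← disjoint_erase_comm, erase_eq_of_notMem (mem_filter.1 hi).2]
      exact h i (mem_filter.1 hi).1 j (mem_filter.1 hj).1
  refine le_of_mul_le_mul_left ?_ hX
  calc (#X : ℝ) * ∑ i ∈ s, (1 : ℝ) / ((#(U i) + #(V i)).choose #(V i) : ℝ)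
      = ∑ i ∈ s, ∑ x ∈ X \ U i,
          (1 : ℝ) / (#(U i) + #((V i).erase x)).choose #((V i).erase x) := by
        rw [mul_sum]
        refine sum_congr rfl fun i hi => ?_
        rw [sum_sdiff_one_div_choose_erase (hU i hi) (hV i hi) ((h i hi i hi).2 rfl)
          (hVne i hi), mul_one_div]
    _ = ∑ x ∈ X, ∑ i ∈ s with x ∉ U i,
          (1 : ℝ) / (#(U i) + #((V i).erase x)).choose #((V i).erase x) :=
        sum_comm' fun i x => by simp only [mem_sdiff, mem_filter]; tauto
    _ ≤ ∑ x ∈ X, 1 := sum_le_sum restrict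
    _ = #X * 1 := by simp

end

/-- Bollobás's inequality. -/
theorem bollobas_inequality {α : Type*} [DecidableEq α] (K : ℕ)
    (U V : Fin K → Finset α)
    (h : ∀ i j, U i ∩ V j = ∅ ↔ i = j) :
    ∑ i, (1 : ℝ) / (((U i).card + (V i).card).choose (V i).card : ℝ) ≤ 1 :=
  bollobas_inequality_on (univ.biUnion fun i => U i ∪ V i) univ U V
    (fun i _ => subset_union_left.trans (subset_biUnion_of_mem (fun i => U i ∪ V i) (mem_univ i)))
    (fun i _ => subset_union_right.trans (subset_biUnion_of_mem (fun i => U i ∪ V i) (mem_univ i)))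
    (fun i _ j _ => disjoint_iff_inter_eq_empty.trans (h i j))
end

section
/- Let n and q be natural numbers and let U and V be disjoint finite subsets of Fin n with |U| + |V| ≤ q. For a uniformly random permutation σ of Fin n, the probability that σ(x) < σ(y) for every x ∈ U and every y ∈ V equals 1 / C(|U| + |V|, |V|), and this probability is at least 1 / C(q, ⌊q/2⌋). -/
/-!
Let `S = U ∪ V`. For every permutation `σ` exactly one `|V|`-subset `W` of `S` lies entirely
above `S \ W` under `σ`, namely the `|V|` elements of `S` with the largest values. On the other
hand, the number of `σ` that put a given split `(S \ W, W)` in order does not depend on `W`: a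
permutation carrying `(U, V)` onto `(S \ W, W)` transports one set of such `σ` onto the other by
composition. Double counting the pairs `(σ, W)` gives
`n! = C(|U| + |V|, |V|) · #{σ | σ U < σ V}`,
and `C(|U| + |V|, |V|) ≤ C(q, |V|) ≤ C(q, ⌊q/2⌋)`.
-/

open Finset Function

variable {α β : Type*}

def AllBefore [LT β] (f : α → β) (A B : Finset α) : Prop :=
  ∀ x ∈ A, ∀ y ∈ B, f x < f y

instance [LT β] [DecidableLT β] (f : α → β) (A B : Finset α) : Decidable (AllBefore f A B) :=
  inferInstanceAs (Decidable (∀ x ∈ A, ∀ y ∈ B, f x < f y))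

theorem allBefore_comp {γ : Type*} [DecidableEq α] [LT β] (f : α → β) (g : γ → α)
    (A B : Finset γ) : AllBefore (f ∘ g) A B ↔ AllBefore f (A.image g) (B.image g) := by
  simp [AllBefore]

section Split

variable [DecidableEq α] {f : α → β}

theorem eq_of_allBefore_sdiff [Preorder β] {S W W' : Finset α}
    (hW : W ⊆ S) (hW' : W' ⊆ S) (hcard : #W = #W')
    (h : AllBefore f (S \ W) W) (h' : AllBefore f (S \ W') W') : W = W' := by
  have hnested : W ⊆ W' ∨ W' ⊆ W := by
    by_contra! ⟨hnot, hnot'⟩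
    obtain ⟨x, hxW, hxW'⟩ := not_subset.1 hnot
    obtain ⟨y, hyW', hyW⟩ := not_subset.1 hnot'
    exact lt_asymm (h' x (mem_sdiff.2 ⟨hW hxW, hxW'⟩) y hyW')
      (h y (mem_sdiff.2 ⟨hW' hyW', hyW⟩) x hxW)
  rcases hnested with hsub | hsub
  · exact eq_of_subset_of_card_le hsub hcard.ge
  · exact (eq_of_subset_of_card_le hsub hcard.le).symm

theorem exists_allBefore_sdiff [LinearOrder β] (hf : Injective f) (S : Finset α) :
    ∀ k ≤ #S, ∃ W ⊆ S, #W = k ∧ AllBefore f (S \ W) W := by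
  induction S using Finset.induction_on_max_value f with
  | empty =>
    intro k hk
    exact ⟨∅, empty_subset _, by rw [card_empty] at hk ⊢; omega, by simp [AllBefore]⟩
  | insert a S haS hmax ih =>
    rintro (_ | k) hk
    · exact ⟨∅, empty_subset _, rfl, by simp [AllBefore]⟩
    obtain ⟨W, hWS, hW, hbefore⟩ := ih k (by rw [card_insert_of_notMem haS] at hk; omega)
    refine ⟨insert a W, insert_subset_insert a hWS,
      by rw [card_insert_of_notMem (fun h => haS (hWS h)), hW], ?_⟩
    intro x hx y hy
    rw [insert_sdiff_insert, mem_sdiff, mem_insert, not_or] at hx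
    obtain ⟨hxS, hxa, hxW⟩ := hx
    rcases mem_insert.1 hy with rfl | hyW
    · exact (hmax x hxS).lt_of_ne (hf.ne hxa)
    · exact hbefore x (mem_sdiff.2 ⟨hxS, hxW⟩) y hyW

theorem card_filter_allBefore_sdiff_eq_one [LinearOrder β] (hf : Injective f) (S : Finset α)
    {k : ℕ} (hk : k ≤ #S) : #{W ∈ S.powersetCard k | AllBefore f (S \ W) W} = 1 := by
  rw [card_eq_one_iff_existsUnique]
  obtain ⟨W, hWS, hW, hbefore⟩ := exists_allBefore_sdiff hf S k hk
  refine ⟨W, mem_filter.2 ⟨mem_powersetCard.2 ⟨hWS, hW⟩, hbefore⟩, fun W' hW' => ?_⟩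
  obtain ⟨hW'mem, hbefore'⟩ := mem_filter.1 hW'
  obtain ⟨hW'S, hW'⟩ := mem_powersetCard.1 hW'mem
  exact eq_of_allBefore_sdiff hW'S hWS (hW'.trans hW.symm) hbefore' hbefore

end Split

theorem exists_perm_image_eq_image_eq [Fintype α] [DecidableEq α] {A B A' B' : Finset α}
    (hAB : Disjoint A B) (hA'B' : Disjoint A' B') (hA : #A = #A') (hB : #B = #B') :
    ∃ π : Equiv.Perm α, A.image π = A' ∧ B.image π = B' := by
  let e : {x // x ∈ A ∪ B} ≃ {x // x ∈ A' ∪ B'} :=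
    (Equiv.Finset.union A B hAB).symm.trans
      (((equivOfCardEq hA).sumCongr (equivOfCardEq hB)).trans (Equiv.Finset.union A' B' hA'B'))
  refine ⟨e.extendSubtype, eq_of_subset_of_card_le ?_ ?_, eq_of_subset_of_card_le ?_ ?_⟩
  · intro y hy
    obtain ⟨x, hx, rfl⟩ := mem_image.1 hy
    rw [e.extendSubtype_apply_of_mem x (mem_union_left _ hx)]
    simp [e, hx]
  · rw [card_image_of_injective _ e.extendSubtype.injective, hA]
  · intro y hy
    obtain ⟨x, hx, rfl⟩ := mem_image.1 hy
    rw [e.extendSubtype_apply_of_mem x (mem_union_right _ hx)]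
    simp [e, hx]
  · rw [card_image_of_injective _ e.extendSubtype.injective, hB]

section Perm

variable [Fintype α] [LinearOrder α]

theorem card_filter_allBefore_image (π : Equiv.Perm α) (A B : Finset α) :
    #{σ : Equiv.Perm α | AllBefore σ (A.image π) (B.image π)} =
      #{σ : Equiv.Perm α | AllBefore σ A B} :=
  card_equiv (Equiv.mulRight π) fun σ => by
    simp only [mem_filter, mem_univ, true_and, Equiv.coe_mulRight, Equiv.Perm.coe_mul]
    exact (allBefore_comp σ π A B).symm

theorem card_filter_allBefore_congr {A B A' B' : Finset α}
    (hAB : Disjoint A B) (hA'B' : Disjoint A' B') (hA : #A = #A') (hB : #B = #B') :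
    #{σ : Equiv.Perm α | AllBefore σ A' B'} = #{σ : Equiv.Perm α | AllBefore σ A B} := by
  obtain ⟨π, rfl, rfl⟩ := exists_perm_image_eq_image_eq hAB hA'B' hA hB
  exact card_filter_allBefore_image π A B

theorem card_filter_allBefore_mul_choose {U V : Finset α} (hUV : Disjoint U V) :
    #{σ : Equiv.Perm α | AllBefore σ U V} * (#U + #V).choose #V =
      (Fintype.card α).factorial := by
  set S := U ∪ V
  have hS : #S = #U + #V := card_union_of_disjoint hUV
  have hcount := card_mul_eq_card_mul (s := univ) (t := S.powersetCard #V)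
    (fun (σ : Equiv.Perm α) W => AllBefore σ (S \ W) W)
    (m := 1) (n := #{σ : Equiv.Perm α | AllBefore σ U V})
    (fun σ _ => card_filter_allBefore_sdiff_eq_one σ.injective S (by omega))
    (fun W hW => by
      obtain ⟨hWS, hW⟩ := mem_powersetCard.1 hW
      exact card_filter_allBefore_congr hUV sdiff_disjoint
        (by rw [card_sdiff_of_subset hWS, hS, hW]; omega) hW.symm)
  rw [card_univ, Fintype.card_perm, mul_one, card_powersetCard, hS] at hcount
  rw [hcount, mul_comm]

end Perm

/-- For a uniformly random permutation of `Fin n`, the probability that all of `U`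
comes before all of `V` equals `1 / C(|U|+|V|, |V|)`, which is at least
`1 / C(q, ⌊q/2⌋)` when `|U| + |V| ≤ q`. -/
theorem prob_U_before_V (n q : ℕ) (U V : Finset (Fin n))
    (hUV : Disjoint U V) (hq : U.card + V.card ≤ q) :
    ((Finset.univ.filter (fun σ : Equiv.Perm (Fin n) =>
        ∀ x ∈ U, ∀ y ∈ V, σ x < σ y)).card : ℝ) / (n.factorial : ℝ) =
      1 / (((U.card + V.card).choose V.card : ℕ) : ℝ) ∧
    (1 : ℝ) / (((U.card + V.card).choose V.card : ℕ) : ℝ) ≥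
      1 / ((q.choose (q / 2) : ℕ) : ℝ) := by
  have hcount : #{σ : Equiv.Perm (Fin n) | ∀ x ∈ U, ∀ y ∈ V, σ x < σ y} *
      (#U + #V).choose #V = n.factorial := by
    convert card_filter_allBefore_mul_choose hUV <;> simp [AllBefore]
  have hchoose : 0 < (#U + #V).choose #V := Nat.choose_pos (Nat.le_add_left _ _)
  refine ⟨?_, ?_⟩
  · rw [div_eq_div_iff (by positivity) (by positivity), one_mul]
    exact_mod_cast hcount
  · exact one_div_le_one_div_of_le (by exact_mod_cast hchoose)
      (by exact_mod_cast (Nat.choose_le_choose _ hq).trans (Nat.choose_le_middle _ _))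
end

section
/- Let N and q be natural numbers and let U_1, ..., U_N and V_1, ..., V_N be finite subsets of some universe with |U_i| + |V_i| ≤ q for every i. Then the number of indices i ∈ {1, ..., N} such that for every j ≠ i the set U_i ∩ V_j is not a subset of V_i is at most C(q, ⌊q/2⌋). Consequently, for at least N − C(q, ⌊q/2⌋) of the indices i there exists some j ≠ i with U_i ∩ V_j ⊆ V_i. -/
/-!
Bollobás' set-pair inequality, proved by counting rankings of the ground set. For each index `i`
counted on the left put `Aᵢ = Uᵢ \ Vᵢ` and `Bᵢ = Vᵢ`: then `Aᵢ ∩ Bᵢ = ∅`, while `Aᵢ ∩ Bⱼ ≠ ∅`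
for `j ≠ i`. No ranking of the `n` points puts both `Aᵢ` below `Bᵢ` and `Aⱼ` below `Bⱼ` when
`i ≠ j`, and by symmetry at least `n! / C(|Aᵢ| + |Bᵢ|, |Aᵢ|) ≥ n! / C(q, ⌊q/2⌋)` rankings put
`Aᵢ` below `Bᵢ`.
-/

open Finset
open scoped Nat

theorem Finset.exists_subset_card_eq_forall_lt {β γ : Type*} [DecidableEq β] [LinearOrder γ]
    {f : β → γ} (hf : Function.Injective f) {K : Finset β} {a : ℕ} (ha : a ≤ #K) :
    ∃ s ⊆ K, #s = a ∧ ∀ x ∈ s, ∀ y ∈ K \ s, f x < f y := by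
  induction a with
  | zero => exact ⟨∅, empty_subset K, card_empty, by simp⟩
  | succ a ih =>
    obtain ⟨s, hsK, hs, hlt⟩ := ih (by omega)
    have hne : (K \ s).Nonempty := by
      rw [← card_pos, card_sdiff_of_subset hsK]
      omega
    obtain ⟨z, hz, hmin⟩ := (K \ s).exists_min_image f hne
    obtain ⟨hzK, hzs⟩ := mem_sdiff.1 hz
    refine ⟨insert z s, insert_subset hzK hsK, by rw [card_insert_of_notMem hzs, hs], ?_⟩
    intro x hx y hy
    obtain ⟨hyK, hyzs⟩ := mem_sdiff.1 hy
    have hy' : y ∈ K \ s := mem_sdiff.2 ⟨hyK, fun h => hyzs (mem_insert_of_mem h)⟩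
    rcases mem_insert.1 hx with rfl | hxs
    · exact (hmin y hy').lt_of_ne (hf.ne fun h => hyzs (h ▸ mem_insert_self x s))
    · exact hlt x hxs y hy'

theorem Finset.exists_perm_mapsTo_of_card_eq {β : Type*} {s t s' t' : Finset β}
    (hst : Disjoint s t) (hst' : Disjoint s' t') (hs : #s = #s') (ht : #t = #t') :
    ∃ π : Equiv.Perm β, (∀ x ∈ s, π x ∈ s') ∧ ∀ y ∈ t, π y ∈ t' := by
  let e₁ : s ≃ s' := Fintype.equivOfCardEq (by simpa using hs)
  let e₂ : t ≃ t' := Fintype.equivOfCardEq (by simpa using ht)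
  obtain ⟨π, hπ⟩ := Equiv.Perm.exists_extending_pair
    (Sum.elim (fun x : s => (x : β)) (fun y : t => (y : β)))
    (Sum.elim (fun x => (e₁ x : β)) (fun y => (e₂ y : β)))
    (Subtype.val_injective.sumElim Subtype.val_injective
      fun x y h => disjoint_left.1 hst x.2 (h ▸ y.2))
    ((Subtype.val_injective.comp e₁.injective).sumElim (Subtype.val_injective.comp e₂.injective)
      fun x y h => disjoint_left.1 hst' (e₁ x).2 <| by
        rw [Function.comp_apply] at h
        exact h ▸ (e₂ y).2)
  exact ⟨π, fun x hx => hπ (.inl ⟨x, hx⟩) ▸ (e₁ _).2, fun y hy => hπ (.inr ⟨y, hy⟩) ▸ (e₂ _).2⟩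

section Rankings

variable {β : Type*} [Fintype β] [DecidableEq β]

def rankingsBefore (s t : Finset β) : Finset (β ≃ Fin (Fintype.card β)) :=
  {f | ∀ x ∈ s, ∀ y ∈ t, f x < f y}

theorem mem_rankingsBefore {s t : Finset β} {f : β ≃ Fin (Fintype.card β)} :
    f ∈ rankingsBefore s t ↔ ∀ x ∈ s, ∀ y ∈ t, f x < f y := by
  simp [rankingsBefore]

theorem disjoint_rankingsBefore {s t s' t' : Finset β} (h : (s ∩ t').Nonempty)
    (h' : (s' ∩ t).Nonempty) : Disjoint (rankingsBefore s t) (rankingsBefore s' t') := by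
  obtain ⟨x, hx⟩ := h
  obtain ⟨y, hy⟩ := h'
  rw [mem_inter] at hx hy
  refine disjoint_left.2 fun f hf hf' => ?_
  rw [mem_rankingsBefore] at hf hf'
  exact lt_asymm (hf x hx.1 y hy.2) (hf' y hy.1 x hx.2)

theorem card_rankingsBefore_le_of_card_eq {s t s' t' : Finset β} (hst : Disjoint s t)
    (hst' : Disjoint s' t') (hs : #s = #s') (ht : #t = #t') :
    #(rankingsBefore s' t') ≤ #(rankingsBefore s t) := by
  obtain ⟨π, hπs, hπt⟩ := Finset.exists_perm_mapsTo_of_card_eq hst hst' hs ht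
  refine card_le_card_of_injOn (fun f => π.trans f) (fun f hf => ?_) fun f _ g _ h => ?_
  · rw [mem_coe, mem_rankingsBefore] at hf ⊢
    exact fun x hx y hy => hf _ (hπs x hx) _ (hπt y hy)
  · exact Equiv.ext fun x => by simpa using DFunLike.congr_fun h (π.symm x)

/-- Every ranking places some `#s`-subset of `s ∪ t` before the rest, and each of these
`C(#s + #t, #s)` choices is placed first by at most `#(rankingsBefore s t)` rankings. -/
theorem factorial_le_choose_mul_card_rankingsBefore {s t : Finset β} (hst : Disjoint s t) :
    (Fintype.card β)! ≤ (#s + #t).choose #s * #(rankingsBefore s t) := by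
  set K := s ∪ t
  have hK : #K = #s + #t := card_union_of_disjoint hst
  have hcover : (univ : Finset (β ≃ Fin (Fintype.card β))) ⊆
      (K.powersetCard #s).biUnion fun s' => rankingsBefore s' (K \ s') := by
    intro f _
    obtain ⟨s', hs'K, hs', hlt⟩ :=
      exists_subset_card_eq_forall_lt f.injective (K := K) (a := #s) (by omega)
    exact mem_biUnion.2 ⟨s', mem_powersetCard.2 ⟨hs'K, hs'⟩, mem_rankingsBefore.2 hlt⟩
  have hbound : ∀ s' ∈ K.powersetCard #s,
      #(rankingsBefore s' (K \ s')) ≤ #(rankingsBefore s t) := by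
    intro s' hs'
    obtain ⟨hs'K, hs'⟩ := mem_powersetCard.1 hs'
    exact card_rankingsBefore_le_of_card_eq hst disjoint_sdiff hs'.symm
      (by rw [card_sdiff_of_subset hs'K, hK, hs']; omega)
  calc (Fintype.card β)!
      = #(univ : Finset (β ≃ Fin (Fintype.card β))) := by
        rw [card_univ, Fintype.card_equiv (Fintype.equivFin β)]
    _ ≤ ∑ s' ∈ K.powersetCard #s, #(rankingsBefore s' (K \ s')) :=
        (card_le_card hcover).trans card_biUnion_le
    _ ≤ #(K.powersetCard #s) • #(rankingsBefore s t) := sum_le_card_nsmul _ _ _ hbound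
    _ = (#s + #t).choose #s * #(rankingsBefore s t) := by rw [card_powersetCard, hK, smul_eq_mul]

theorem card_le_choose_half_of_crossIntersecting_of_fintype {ι : Type*} (S : Finset ι)
    (A B : ι → Finset β) (q : ℕ) (hdisj : ∀ i ∈ S, Disjoint (A i) (B i))
    (hcross : ∀ i ∈ S, ∀ j ∈ S, i ≠ j → (A i ∩ B j).Nonempty)
    (hcard : ∀ i ∈ S, #(A i) + #(B i) ≤ q) :
    #S ≤ q.choose (q / 2) := by
  set n := Fintype.card β
  have hlower : ∀ i ∈ S, n ! ≤ q.choose (q / 2) * #(rankingsBefore (A i) (B i)) := fun i hi =>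
    (factorial_le_choose_mul_card_rankingsBefore (hdisj i hi)).trans <| Nat.mul_le_mul_right _ <|
      (Nat.choose_mono _ (hcard i hi)).trans (Nat.choose_le_middle _ _)
  have hpair : (S : Set ι).PairwiseDisjoint fun i => rankingsBefore (A i) (B i) :=
    fun i hi j hj hij => disjoint_rankingsBefore (hcross i hi j hj hij) (hcross j hj i hi hij.symm)
  have hunion : #(S.biUnion fun i => rankingsBefore (A i) (B i)) ≤ n ! :=
    (card_le_univ _).trans_eq (Fintype.card_equiv (Fintype.equivFin β))
  refine Nat.le_of_mul_le_mul_right ?_ (Nat.factorial_pos n)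
  calc #S * n ! = ∑ _i ∈ S, n ! := by rw [sum_const, smul_eq_mul]
    _ ≤ ∑ i ∈ S, q.choose (q / 2) * #(rankingsBefore (A i) (B i)) := sum_le_sum hlower
    _ = q.choose (q / 2) * #(S.biUnion fun i => rankingsBefore (A i) (B i)) := by
        rw [← mul_sum, card_biUnion hpair]
    _ ≤ q.choose (q / 2) * n ! := Nat.mul_le_mul_left _ hunion

end Rankings

theorem card_le_choose_half_of_crossIntersecting {α ι : Type*} [DecidableEq α] (S : Finset ι)
    (A B : ι → Finset α) (q : ℕ) (hdisj : ∀ i ∈ S, Disjoint (A i) (B i))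
    (hcross : ∀ i ∈ S, ∀ j ∈ S, i ≠ j → (A i ∩ B j).Nonempty)
    (hcard : ∀ i ∈ S, #(A i) + #(B i) ≤ q) :
    #S ≤ q.choose (q / 2) := by
  set X := S.biUnion fun i => A i ∪ B i
  have hAX : ∀ i ∈ S, A i ⊆ X := fun i hi =>
    subset_union_left.trans (subset_biUnion_of_mem (fun i => A i ∪ B i) hi)
  have hBX : ∀ i ∈ S, B i ⊆ X := fun i hi =>
    subset_union_right.trans (subset_biUnion_of_mem (fun i => A i ∪ B i) hi)
  have hcard_subtype : ∀ s ⊆ X, #(s.subtype (· ∈ X)) = #s := fun s hs => by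
    rw [card_subtype, filter_true_of_mem hs]
  refine card_le_choose_half_of_crossIntersecting_of_fintype S
    (fun i => (A i).subtype (· ∈ X)) (fun i => (B i).subtype (· ∈ X)) q
    (fun i hi => disjoint_left.2 fun x hxA hxB =>
      disjoint_left.1 (hdisj i hi) (mem_subtype.1 hxA) (mem_subtype.1 hxB))
    (fun i hi j hj hij => ?_)
    (fun i hi => by rw [hcard_subtype _ (hAX i hi), hcard_subtype _ (hBX i hi)]; exact hcard i hi)
  obtain ⟨x, hx⟩ := hcross i hi j hj hij
  obtain ⟨hxA, hxB⟩ := mem_inter.1 hx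
  exact ⟨⟨x, hAX i hi hxA⟩, mem_inter.2 ⟨mem_subtype.2 hxA, mem_subtype.2 hxB⟩⟩

/-- Application of the Combinatorial Lemma: at most `C(q, ⌊q/2⌋)` indices `i`
satisfy the non-containment condition against all `j ≠ i`; consequently at
least `N - C(q, ⌊q/2⌋)` indices `i` admit some `j ≠ i` with `U i ∩ V j ⊆ V i`. -/
theorem useful_indices_bound {α : Type*} [DecidableEq α] (N q : ℕ)
    (U V : Fin N → Finset α)
    (hcard : ∀ i, (U i).card + (V i).card ≤ q) :
    (Finset.univ.filter (fun i : Fin N =>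
        ∀ j, j ≠ i → ¬ (U i ∩ V j ⊆ V i))).card ≤ q.choose (q / 2) ∧
    N - q.choose (q / 2) ≤
      (Finset.univ.filter (fun i : Fin N =>
        ∃ j, j ≠ i ∧ U i ∩ V j ⊆ V i)).card := by
  set S := univ.filter fun i : Fin N => ∀ j, j ≠ i → ¬ (U i ∩ V j ⊆ V i)
  have hS : #S ≤ q.choose (q / 2) := by
    refine card_le_choose_half_of_crossIntersecting S (fun i => U i \ V i) V q
      (fun i _ => sdiff_disjoint) (fun i hi j _ hij => ?_)
      (fun i _ => (Nat.add_le_add_right (card_le_card sdiff_subset) _).trans (hcard i))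
    obtain ⟨x, hx, hxV⟩ := not_subset.1 ((mem_filter.1 hi).2 j (Ne.symm hij))
    exact ⟨x, mem_inter.2 ⟨mem_sdiff.2 ⟨(mem_inter.1 hx).1, hxV⟩, (mem_inter.1 hx).2⟩⟩
  have hsplit := card_filter_add_card_filter_not (s := (univ : Finset (Fin N)))
    fun i => ∀ j, j ≠ i → ¬ (U i ∩ V j ⊆ V i)
  simp only [not_forall, not_not, exists_prop, card_univ, Fintype.card_fin] at hsplit
  change #S + _ = N at hsplit
  exact ⟨hS, by omega⟩
end

section
/- Let H₂ be the binary entropy function and let c = (3 − √5)/2. Then for every x in the open interval (0, 1), H₂(x)/(1 + x) ≤ H₂(c)/(1 + c); that is, c = (3 − √5)/2 maximizes the function x ↦ H₂(x)/(1 + x) on (0, 1). -/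
/-! With `c = (3 - √5)/2 = φ⁻²` and `1 - c = φ⁻¹` (`φ` the golden ratio), the cross entropy
`x log c⁻¹ + (1 - x) log (1 - c)⁻¹` of `x` against `c` is the linear function `(1 + x) log φ`.
By Gibbs' inequality it dominates the entropy `H(x)`, with equality at `x = c`, so
`H(x)/(1 + x) ≤ log φ = H(c)/(1 + c)`. -/

/-- The binary entropy function `H₂(x) = -x·log₂ x - (1-x)·log₂(1-x)`
(with the convention `log₂ 0 = 0`, so `H₂ 0 = H₂ 1 = 0`). -/
noncomputable def binEntropy2 (x : ℝ) : ℝ :=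
  -(x * Real.logb 2 x) - (1 - x) * Real.logb 2 (1 - x)

open Real goldenRatio

lemma binEntropy2_eq_binEntropy_div_log_two (x : ℝ) : binEntropy2 x = binEntropy x / log 2 := by
  simp only [binEntropy2, binEntropy, logb, log_inv]
  ring

lemma mul_log_inv_le_mul_log_inv_add_sub {p q : ℝ} (hp : 0 ≤ p) (hq : 0 < q) :
    p * log p⁻¹ ≤ p * log q⁻¹ + (q - p) := by
  rcases hp.eq_or_lt with rfl | hp
  · simpa using hq.le
  have hlog := log_le_sub_one_of_pos (div_pos hq hp)
  rw [log_div hq.ne' hp.ne'] at hlog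
  have : p * log p⁻¹ - p * log q⁻¹ ≤ q - p :=
    calc p * log p⁻¹ - p * log q⁻¹ = p * (log q - log p) := by rw [log_inv, log_inv]; ring
      _ ≤ p * (q / p - 1) := mul_le_mul_of_nonneg_left hlog hp.le
      _ = q - p := by field_simp
  linarith

lemma binEntropy_le_mul_log_inv_add_mul_log_inv {p q : ℝ} (hp₀ : 0 ≤ p) (hp₁ : p ≤ 1)
    (hq₀ : 0 < q) (hq₁ : q < 1) :
    binEntropy p ≤ p * log q⁻¹ + (1 - p) * log (1 - q)⁻¹ := by
  have h₀ := mul_log_inv_le_mul_log_inv_add_sub hp₀ hq₀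
  have h₁ := mul_log_inv_le_mul_log_inv_add_sub (sub_nonneg.2 hp₁) (sub_pos.2 hq₁)
  rw [binEntropy]
  linarith

lemma three_sub_sqrt_five_div_two_eq : (3 - √5) / 2 = φ⁻¹ ^ 2 := by
  rw [inv_goldenRatio, neg_sq, goldenConj_sq, goldenConj]
  ring

lemma one_sub_three_sub_sqrt_five_div_two_eq : 1 - (3 - √5) / 2 = φ⁻¹ := by
  rw [inv_goldenRatio, goldenConj]
  ring

lemma mul_log_inv_add_mul_log_inv_three_sub_sqrt_five_div_two (p : ℝ) :
    p * log ((3 - √5) / 2)⁻¹ + (1 - p) * log (1 - (3 - √5) / 2)⁻¹ = (1 + p) * log φ := by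
  rw [one_sub_three_sub_sqrt_five_div_two_eq, three_sub_sqrt_five_div_two_eq, inv_pow, inv_inv,
    inv_inv, log_pow]
  push_cast
  ring

lemma three_sub_sqrt_five_div_two_pos : 0 < (3 - √5) / 2 := by
  rw [three_sub_sqrt_five_div_two_eq]
  positivity

lemma three_sub_sqrt_five_div_two_lt_one : (3 - √5) / 2 < 1 := by
  have h := inv_pos.2 goldenRatio_pos
  rw [← one_sub_three_sub_sqrt_five_div_two_eq] at h
  linarith

lemma binEntropy_le_one_add_mul_log_goldenRatio {p : ℝ} (hp₀ : 0 ≤ p) (hp₁ : p ≤ 1) :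
    binEntropy p ≤ (1 + p) * log φ := by
  rw [← mul_log_inv_add_mul_log_inv_three_sub_sqrt_five_div_two]
  exact binEntropy_le_mul_log_inv_add_mul_log_inv hp₀ hp₁ three_sub_sqrt_five_div_two_pos
    three_sub_sqrt_five_div_two_lt_one

lemma binEntropy_div_one_add_le_log_goldenRatio {p : ℝ} (hp₀ : 0 ≤ p) (hp₁ : p ≤ 1) :
    binEntropy p / (1 + p) ≤ log φ := by
  rw [div_le_iff₀ (by linarith), mul_comm]
  exact binEntropy_le_one_add_mul_log_goldenRatio hp₀ hp₁

lemma binEntropy_div_one_add_three_sub_sqrt_five_div_two :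
    binEntropy ((3 - √5) / 2) / (1 + (3 - √5) / 2) = log φ := by
  have hc : 1 + (3 - √5) / 2 ≠ 0 := by linarith [three_sub_sqrt_five_div_two_pos]
  rw [binEntropy, mul_log_inv_add_mul_log_inv_three_sub_sqrt_five_div_two,
    mul_div_cancel_left₀ _ hc]

/-- `c = (3 - √5)/2` maximizes `x ↦ H₂(x)/(1+x)` on `(0, 1)`. -/
theorem entropy_ratio_maximized :
    ∀ x ∈ Set.Ioo (0 : ℝ) 1,
      binEntropy2 x / (1 + x) ≤
        binEntropy2 ((3 - Real.sqrt 5) / 2) / (1 + (3 - Real.sqrt 5) / 2) := by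
  rintro x ⟨hx₀, hx₁⟩
  rw [binEntropy2_eq_binEntropy_div_log_two, binEntropy2_eq_binEntropy_div_log_two,
    div_right_comm _ (log 2), div_right_comm _ (log 2),
    binEntropy_div_one_add_three_sub_sqrt_five_div_two]
  exact div_le_div_of_nonneg_right (binEntropy_div_one_add_le_log_goldenRatio hx₀.le hx₁.le)
    (log_nonneg one_le_two)
end
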